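/- arXiv:1408.4106 — 3 statements merged into one kernel-verified Lean document; each statement's English description precedes it below -/
import Mathlib

section
/- Let π : M' → M be a smooth submersion of oriented manifolds, Y ⊂ M' and X ⊂ M smooth oriented submanifolds such that the restriction of π to Y is a diffeomorphism onto its image and X and π(Y) meet transversely. Then π(Y • π⁻¹X) = π(Y) • X as oriented submanifolds. -/
open Submodule Set Module

lemma fin_append_eq_sum_elim {α : Type*} {m n : ℕ} (f : Fin m → α) (g : Fin n → α) :
    Fin.append f g = Sum.elim f g ∘ ⇑finSumFinEquiv.symm := by
  funext i
  refine Fin.addCases (fun j => ?_) (fun j => ?_) i <;>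
    simp [Fin.append_left, Fin.append_right]

lemma range_fin_append {α : Type*} {m n : ℕ} (f : Fin m → α) (g : Fin n → α) :
    Set.range (Fin.append f g) = Set.range f ∪ Set.range g := by
  rw [fin_append_eq_sum_elim, Set.range_comp, finSumFinEquiv.symm.surjective.range_eq,
    Set.image_univ, Sum.elim_range]

lemma li_fin_append {V : Type*} [AddCommGroup V] [Module ℝ V] {m n : ℕ}
    {f : Fin m → V} {g : Fin n → V} (hf : LinearIndependent ℝ f) (hg : LinearIndependent ℝ g)
    (h : Disjoint (Submodule.span ℝ (Set.range f)) (Submodule.span ℝ (Set.range g))) :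
    LinearIndependent ℝ (Fin.append f g) := by
  rw [fin_append_eq_sum_elim]
  exact (hf.sum_type hg h).comp _ finSumFinEquiv.symm.injective

lemma comp_fin_append {α β : Type*} {m n : ℕ} (h : α → β) (f : Fin m → α) (g : Fin n → α) :
    h ∘ Fin.append f g = Fin.append (h ∘ f) (h ∘ g) := by
  funext i
  refine Fin.addCases (fun j => ?_) (fun j => ?_) i <;>
    simp [Fin.append_left, Fin.append_right]

lemma alt_ne_zero_of_li {V : Type*} [AddCommGroup V] [Module ℝ V] [FiniteDimensional ℝ V]
    {n : ℕ} (f : AlternatingMap ℝ V ℝ (Fin n)) (hf : f ≠ 0)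
    (hn : Module.finrank ℝ V = n) (v : Fin n → V) (hv : LinearIndependent ℝ v) :
    f v ≠ 0 := by
  cases n with
  | zero =>
    intro h
    apply hf
    ext w
    rw [Subsingleton.elim w v, h]; rfl
  | succ m =>
    have hcard : Fintype.card (Fin (m + 1)) = Module.finrank ℝ V := by simp [hn]
    set B := basisOfLinearIndependentOfCardEqFinrank hv hcard with hBdef
    have hB : ⇑B = v := coe_basisOfLinearIndependentOfCardEqFinrank hv hcard
    intro h
    apply hf
    rw [f.eq_smul_basis_det B, show (f ⇑B : ℝ) = 0 by rw [hB]; exact h, zero_smul]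

lemma exists_complement_family {V : Type*} [AddCommGroup V] [Module ℝ V]
    [FiniteDimensional ℝ V] (P W : Submodule ℝ V) (hWP : W ≤ P) {k : ℕ}
    (hk : finrank ℝ P = finrank ℝ W + k) :
    ∃ v : Fin k → V, (∀ i, v i ∈ P) ∧ LinearIndependent ℝ v ∧
      Submodule.span ℝ (Set.range v) ⊔ W = P ∧
      Disjoint (Submodule.span ℝ (Set.range v)) W := by
  set W₀ : Submodule ℝ P := Submodule.comap P.subtype W with hW₀
  obtain ⟨C₀, hC₀⟩ := W₀.exists_isCompl
  have hmapW₀ : Submodule.map P.subtype W₀ = W := by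
    rw [hW₀, Submodule.map_comap_subtype, inf_eq_right.2 hWP]
  have hW₀rank : finrank ℝ W₀ = finrank ℝ W := by
    rw [← hmapW₀, Submodule.finrank_map_subtype_eq]
  have hC₀rank : finrank ℝ C₀ = k := by
    have := Submodule.finrank_add_eq_of_isCompl hC₀
    rw [hW₀rank] at this
    omega
  set C : Submodule ℝ V := Submodule.map P.subtype C₀ with hC
  have hCP : C ≤ P := Submodule.map_subtype_le P C₀
  have hCrank : finrank ℝ C = k := by rw [hC, Submodule.finrank_map_subtype_eq, hC₀rank]
  set bc := Module.finBasisOfFinrankEq ℝ C hCrank with hbc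
  have hspan : Submodule.span ℝ (Set.range fun i => ((bc i : C) : V)) = C := by
    rw [show (Set.range fun i => ((bc i : C) : V)) = ⇑C.subtype '' Set.range ⇑bc by
        rw [← Set.range_comp]; rfl,
      Submodule.span_image, bc.span_eq, Submodule.map_top, Submodule.range_subtype]
  refine ⟨fun i => ((bc i : C) : V), fun i => hCP (bc i).2,
    bc.linearIndependent.map' C.subtype C.ker_subtype, ?_, ?_⟩
  · rw [hspan, hC, ← hmapW₀, ← Submodule.map_sup, sup_comm, hC₀.sup_eq_top,
      Submodule.map_top, Submodule.range_subtype]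
  · rw [hspan, disjoint_iff, hC, ← hmapW₀,
      ← Submodule.map_inf _ (Submodule.injective_subtype P), inf_comm, hC₀.inf_eq_bot,
      Submodule.map_bot]

set_option maxHeartbeats 2000000 in
/-- `π(Y • π⁻¹X) = π(Y) • X` as oriented submanifolds, when the
submersion `π : M' → M` restricts to a diffeomorphism on `Y` and `X` meets `π(Y)`
transversely. -/
theorem stmt_7 {V V' : Type*} [AddCommGroup V] [Module ℝ V] [AddCommGroup V'] [Module ℝ V']
    [FiniteDimensional ℝ V] [FiniteDimensional ℝ V']
    (a b c e : ℕ)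
    (hdV : Module.finrank ℝ V = a + b + c) (hdV' : Module.finrank ℝ V' = a + b + c + e)
    (π : V' →ₗ[ℝ] V) (hπ : Function.Surjective π)
    (Y : Submodule ℝ V') (hdY : Module.finrank ℝ Y = a + b)
    (hinj : Set.InjOn π (Y : Set V'))
    (X : Submodule ℝ V) (hdX : Module.finrank ℝ X = b + c)
    (htrans : Submodule.map π Y ⊔ X = ⊤)
    (ωV : AlternatingMap ℝ V ℝ (Fin (a + b + c))) (hωV : ωV ≠ 0)
    (ωV' : AlternatingMap ℝ V' ℝ (Fin (a + b + c + e))) (hωV' : ωV' ≠ 0)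
    (ωK : AlternatingMap ℝ V' ℝ (Fin e))
    (ωY : AlternatingMap ℝ V' ℝ (Fin (a + b))) (ωpY : AlternatingMap ℝ V ℝ (Fin (a + b)))
    (ωX : AlternatingMap ℝ V ℝ (Fin (b + c)))
    (ωXpre : AlternatingMap ℝ V' ℝ (Fin (b + c + e)))
    (ωI : AlternatingMap ℝ V' ℝ (Fin b))
    (ωIpush : AlternatingMap ℝ V ℝ (Fin b))
    (ωJ : AlternatingMap ℝ V ℝ (Fin b))
    -- fiber orientation convention for π:
    (hfib : ∀ (bb : Fin (a + b + c) → V') (kk : Fin e → V'),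
      (∀ i, kk i ∈ LinearMap.ker π) →
      Real.sign (ωV' (Fin.append bb kk ∘ Fin.cast (by omega))) =
        Real.sign (ωV (π ∘ bb)) * Real.sign (ωK kk))
    -- preimage orientation convention for π⁻¹X:
    (hpreX : ∀ (bb : Fin (b + c) → V') (kk : Fin e → V'),
      (∀ i, π (bb i) ∈ X) → (∀ i, kk i ∈ LinearMap.ker π) →
      Real.sign (ωXpre (Fin.append bb kk ∘ Fin.cast (by omega))) =
        Real.sign (ωX (π ∘ bb)) * Real.sign (ωK kk))
    -- pushforward orientations along the injective restrictions of π: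
    (hpushY : ∀ t : Fin (a + b) → V', (∀ i, t i ∈ Y) →
      Real.sign (ωpY (π ∘ t)) = Real.sign (ωY t))
    (hpushI : ∀ t : Fin b → V', (∀ i, t i ∈ Y ⊓ Submodule.comap π X) →
      Real.sign (ωIpush (π ∘ t)) = Real.sign (ωI t))
    -- adapted-basis convention for the upstairs intersection Y • π⁻¹X:
    (hI : ∀ (v : Fin a → V') (u : Fin b → V') (w : Fin (c + e) → V'),
      (∀ i, v i ∈ Y) → (∀ i, u i ∈ Y ⊓ Submodule.comap π X) →
      (∀ i, w i ∈ Submodule.comap π X) →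
      ωV' (Fin.append (Fin.append v u) w ∘ Fin.cast (by omega)) ≠ 0 →
      Real.sign (ωV' (Fin.append (Fin.append v u) w ∘ Fin.cast (by omega))) *
          Real.sign (ωY (Fin.append v u)) * Real.sign (ωI u) *
          Real.sign (ωXpre (Fin.append u w ∘ Fin.cast (by omega))) = 1)
    -- adapted-basis convention for the downstairs intersection π(Y) • X:
    (hJ : ∀ (v : Fin a → V) (u : Fin b → V) (w : Fin c → V),
      (∀ i, v i ∈ Submodule.map π Y) → (∀ i, u i ∈ Submodule.map π Y ⊓ X) →
      (∀ i, w i ∈ X) →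
      ωV (Fin.append (Fin.append v u) w ∘ Fin.cast (by omega)) ≠ 0 →
      Real.sign (ωV (Fin.append (Fin.append v u) w ∘ Fin.cast (by omega))) *
          Real.sign (ωpY (Fin.append v u)) * Real.sign (ωJ u) *
          Real.sign (ωX (Fin.append u w)) = 1) :
    Submodule.map π (Y ⊓ Submodule.comap π X) = Submodule.map π Y ⊓ X ∧
      ∀ s : Fin b → V, (∀ i, s i ∈ Submodule.map π Y ⊓ X) →
        Real.sign (ωIpush s) = Real.sign (ωJ s) := by
  constructor
  · apply le_antisymm
    · exact le_inf (Submodule.map_mono inf_le_left)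
        ((Submodule.map_mono inf_le_right).trans (Submodule.map_comap_le π X))
    · rintro x hx
      rw [Submodule.mem_inf] at hx
      obtain ⟨⟨y, hy, rfl⟩, h2⟩ := hx
      exact ⟨y, Submodule.mem_inf.2 ⟨hy, Submodule.mem_comap.2 h2⟩, rfl⟩
  intro s hs
  by_cases hli : LinearIndependent ℝ s
  swap
  · rw [ωIpush.map_linearDependent s hli, ωJ.map_linearDependent s hli]
  -- dimensions
  have hPinj : Function.Injective (π ∘ₗ Y.subtype) := fun x y hxy =>
    Subtype.ext (hinj x.2 y.2 hxy)
  have hPrank : finrank ℝ (Submodule.map π Y) = a + b := by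
    rw [show Submodule.map π Y = LinearMap.range (π ∘ₗ Y.subtype) by
        rw [LinearMap.range_comp, Submodule.range_subtype],
      LinearMap.finrank_range_of_inj hPinj, hdY]
  have hWrank : finrank ℝ (Submodule.map π Y ⊓ X : Submodule ℝ V) = b := by
    have h2 := Submodule.finrank_sup_add_finrank_inf_eq (Submodule.map π Y) X
    rw [htrans, finrank_top, hdV, hPrank, hdX] at h2
    omega
  -- span of s
  have hspan_s : Submodule.span ℝ (Set.range s) = Submodule.map π Y ⊓ X := by
    apply Submodule.eq_of_le_of_finrank_eq
    · rw [Submodule.span_le]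
      rintro x ⟨i, rfl⟩
      exact hs i
    · rw [finrank_span_eq_card hli, Fintype.card_fin, hWrank]
  -- complements downstairs
  obtain ⟨v, hvP, hvli, hvsup, hvdisj⟩ :=
    exists_complement_family (k := a) (Submodule.map π Y) (Submodule.map π Y ⊓ X) inf_le_left
      (by rw [hPrank, hWrank]; omega)
  obtain ⟨w, hwX, hwli, hwsup, hwdisj⟩ :=
    exists_complement_family (k := c) X (Submodule.map π Y ⊓ X) inf_le_right
      (by rw [hdX, hWrank])
  -- downstairs adapted basis
  have hvs_li : LinearIndependent ℝ (Fin.append v s) :=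
    li_fin_append hvli hli (by rw [hspan_s]; exact hvdisj)
  have hspan_vs : Submodule.span ℝ (Set.range (Fin.append v s)) = Submodule.map π Y := by
    rw [range_fin_append, Submodule.span_union, hspan_s]
    exact hvsup
  have hwle : Submodule.span ℝ (Set.range w) ≤ X := hwsup ▸ le_sup_left
  have hF_li : LinearIndependent ℝ (Fin.append (Fin.append v s) w) := by
    apply li_fin_append hvs_li hwli
    rw [hspan_vs]
    have hle : Submodule.map π Y ⊓ Submodule.span ℝ (Set.range w) ≤
        (Submodule.map π Y ⊓ X) ⊓ Submodule.span ℝ (Set.range w) :=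
      le_inf (le_inf inf_le_left (inf_le_right.trans hwle)) inf_le_right
    have hb : (Submodule.map π Y ⊓ X) ⊓ Submodule.span ℝ (Set.range w) = ⊥ :=
      disjoint_iff.1 hwdisj.symm
    exact disjoint_iff.2 (le_bot_iff.1 (hle.trans (le_of_eq hb)))
  have hFne : ωV (Fin.append (Fin.append v s) w) ≠ 0 :=
    alt_ne_zero_of_li ωV hωV hdV _ hF_li
  -- lifts upstairs
  have hschoice : ∀ i, ∃ y, y ∈ Y ∧ π y = s i := fun i =>
    Submodule.mem_map.1 (Submodule.mem_inf.1 (hs i)).1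
  choose t htY hts using hschoice
  have htmem : ∀ i, t i ∈ Y ⊓ Submodule.comap π X := fun i =>
    Submodule.mem_inf.2 ⟨htY i, Submodule.mem_comap.2
      (by rw [hts i]; exact (Submodule.mem_inf.1 (hs i)).2)⟩
  have hπt : ⇑π ∘ t = s := funext hts
  have hvchoice : ∀ i, ∃ y, y ∈ Y ∧ π y = v i := fun i => Submodule.mem_map.1 (hvP i)
  choose v' hv'Y hπv' using hvchoice
  have hπv : ⇑π ∘ v' = v := funext hπv'
  choose w' hπw' using fun i => hπ (w i)
  have hπw : ⇑π ∘ w' = w := funext hπw'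
  -- kernel basis
  have hkrank : finrank ℝ (LinearMap.ker π) = e := by
    have h3 := LinearMap.finrank_range_add_finrank_ker π
    rw [LinearMap.range_eq_top.2 hπ, finrank_top, hdV, hdV'] at h3
    omega
  set bk := Module.finBasisOfFinrankEq ℝ (LinearMap.ker π) hkrank with hbk
  set kk : Fin e → V' := fun i => ((bk i : LinearMap.ker π) : V') with hkkdef
  have hkker : ∀ i, kk i ∈ LinearMap.ker π := fun i => (bk i).2
  have hkli : LinearIndependent ℝ kk :=
    bk.linearIndependent.map' _ (LinearMap.ker π).ker_subtype
  -- upstairs independence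
  have hπG : ⇑π ∘ Fin.append (Fin.append v' t) w' = Fin.append (Fin.append v s) w := by
    rw [comp_fin_append, comp_fin_append, hπv, hπt, hπw]
  have hGli : LinearIndependent ℝ (Fin.append (Fin.append v' t) w') :=
    LinearIndependent.of_comp π (by rw [hπG]; exact hF_li)
  have hGdisj : Disjoint (Submodule.span ℝ (Set.range (Fin.append (Fin.append v' t) w')))
      (Submodule.span ℝ (Set.range kk)) := by
    have hkspan : Submodule.span ℝ (Set.range kk) ≤ LinearMap.ker π := by
      rw [Submodule.span_le]
      rintro x ⟨i, rfl⟩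
      exact hkker i
    refine Disjoint.mono_right hkspan ?_
    rw [Submodule.disjoint_def]
    intro x hxspan hxker
    obtain ⟨cf, rfl⟩ := (mem_span_range_iff_exists_fun ℝ).1 hxspan
    have h0 : ∑ i, cf i • Fin.append (Fin.append v s) w i = 0 := by
      rw [← hπG]
      have : π (∑ i, cf i • Fin.append (Fin.append v' t) w' i) = 0 :=
        LinearMap.mem_ker.1 hxker
      simpa [map_sum, map_smul] using this
    have hcf := Fintype.linearIndependent_iff.1 hF_li cf h0
    simp [hcf]
  have hEli : LinearIndependent ℝ (Fin.append (Fin.append (Fin.append v' t) w') kk) :=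
    li_fin_append hGli hkli hGdisj
  have hEne : ωV' (Fin.append (Fin.append (Fin.append v' t) w') kk) ≠ 0 :=
    alt_ne_zero_of_li ωV' hωV' hdV' _ hEli
  -- memberships for hI
  have hwkmem : ∀ i : Fin (c + e), Fin.append w' kk i ∈ Submodule.comap π X := by
    intro i
    refine Fin.addCases (fun j => ?_) (fun j => ?_) i
    · rw [Fin.append_left]
      exact Submodule.mem_comap.2 (by rw [hπw' j]; exact hwX j)
    · rw [Fin.append_right]
      exact Submodule.mem_comap.2 (by rw [LinearMap.mem_ker.1 (hkker j)]; exact X.zero_mem)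
  -- associativity of appends
  have hassoc1 : Fin.append (Fin.append v' t) (Fin.append w' kk) ∘ Fin.cast (by omega) =
      Fin.append (Fin.append (Fin.append v' t) w') kk := (Fin.append_assoc _ _ _).symm
  have hassoc2 : Fin.append t (Fin.append w' kk) ∘ Fin.cast (by omega) =
      Fin.append (Fin.append t w') kk := (Fin.append_assoc _ _ _).symm
  -- the four sign identities
  have hJ' : Real.sign (ωV (Fin.append (Fin.append v s) w)) *
      Real.sign (ωpY (Fin.append v s)) * Real.sign (ωJ s) *
      Real.sign (ωX (Fin.append s w)) = 1 := hJ v s w hvP hs hwX hFne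
  have hI' : Real.sign (ωV' (Fin.append (Fin.append (Fin.append v' t) w') kk)) *
      Real.sign (ωY (Fin.append v' t)) * Real.sign (ωI t) *
      Real.sign (ωXpre (Fin.append (Fin.append t w') kk)) = 1 := by
    have h5 := hI v' t (Fin.append w' kk) hv'Y htmem hwkmem (by rw [hassoc1]; exact hEne)
    rw [← hassoc1, ← hassoc2]
    exact h5
  have hfib' : Real.sign (ωV' (Fin.append (Fin.append (Fin.append v' t) w') kk)) =
      Real.sign (ωV (Fin.append (Fin.append v s) w)) * Real.sign (ωK kk) := by
    have h7 := hfib (Fin.append (Fin.append v' t) w') kk hkker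
    rw [← hπG]
    exact h7
  have hpre' : Real.sign (ωXpre (Fin.append (Fin.append t w') kk)) =
      Real.sign (ωX (Fin.append s w)) * Real.sign (ωK kk) := by
    have hmem : ∀ i, π (Fin.append t w' i) ∈ X := by
      intro i
      refine Fin.addCases (fun j => ?_) (fun j => ?_) i
      · rw [Fin.append_left, hts j]
        exact (Submodule.mem_inf.1 (hs j)).2
      · rw [Fin.append_right, hπw' j]
        exact hwX j
    have h6 := hpreX (Fin.append t w') kk hmem hkker
    have hπtw : ⇑π ∘ Fin.append t w' = Fin.append s w := by
      rw [comp_fin_append, hπt, hπw]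
    rw [← hπtw]
    exact h6
  have hpushY' : Real.sign (ωpY (Fin.append v s)) = Real.sign (ωY (Fin.append v' t)) := by
    have hmem : ∀ i : Fin (a + b), Fin.append v' t i ∈ Y := by
      intro i
      refine Fin.addCases (fun j => ?_) (fun j => ?_) i
      · rw [Fin.append_left]; exact hv'Y j
      · rw [Fin.append_right]; exact htY j
    have h8 := hpushY (Fin.append v' t) hmem
    have hπvt : ⇑π ∘ Fin.append v' t = Fin.append v s := by
      rw [comp_fin_append, hπv, hπt]
    rw [← hπvt]
    exact h8
  have hpushI' : Real.sign (ωIpush s) = Real.sign (ωI t) := by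
    have h9 := hpushI t htmem
    rw [← hπt]
    exact h9
  -- sign algebra
  have hEsne : Real.sign (ωV' (Fin.append (Fin.append (Fin.append v' t) w') kk)) ≠ 0 :=
    fun hh => hEne (Real.sign_eq_zero_iff.1 hh)
  have hKne : Real.sign (ωK kk) ≠ 0 := by
    intro h0
    exact hEsne (by rw [hfib', h0, mul_zero])
  have hk2 : Real.sign (ωK kk) * Real.sign (ωK kk) = 1 := by
    rcases Real.sign_apply_eq (ωK kk) with h | h | h
    · rw [h]; norm_num
    · exact absurd h hKne
    · rw [h]; norm_num
  rw [← hpushY', hfib', hpre'] at hI'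
  have hQI : Real.sign (ωV (Fin.append (Fin.append v s) w)) *
      Real.sign (ωpY (Fin.append v s)) * Real.sign (ωX (Fin.append s w)) *
      Real.sign (ωI t) = 1 := by
    linear_combination hI' - (Real.sign (ωV (Fin.append (Fin.append v s) w)) *
      Real.sign (ωpY (Fin.append v s)) * Real.sign (ωX (Fin.append s w)) *
      Real.sign (ωI t)) * hk2
  have hQJ : Real.sign (ωV (Fin.append (Fin.append v s) w)) *
      Real.sign (ωpY (Fin.append v s)) * Real.sign (ωX (Fin.append s w)) *
      Real.sign (ωJ s) = 1 := by linear_combination hJ'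
  have hQne : Real.sign (ωV (Fin.append (Fin.append v s) w)) *
      Real.sign (ωpY (Fin.append v s)) * Real.sign (ωX (Fin.append s w)) ≠ 0 := by
    intro h0
    rw [h0, zero_mul] at hQJ
    exact zero_ne_one hQJ
  rw [hpushI']
  exact mul_left_cancel₀ hQne (hQI.trans hQJ.symm)
end

section
/- Let A be a smooth polyhedron (properly embedded smooth submanifold with corners) in a smooth n-manifold M. Then A admits a natural stratification A = ⨆_{l=0}^n A_l into disjoint locally closed smooth submanifolds, where A_l is the set of points near which A is diffeomorphic to an orthant with l-dimensional interior directions; in particular A_n is the topological interior of A and each A_l is a smooth submanifold of dimension l. -/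
open Set

open Filter Topology


variable {n k : ℕ}

theorem aux_surj {φ : Fin k → (EuclideanSpace ℝ (Fin n) →L[ℝ] ℝ)}
    (h : LinearIndependent ℝ φ) :
    Function.Surjective (LinearMap.pi (fun i => (φ i : EuclideanSpace ℝ (Fin n) →ₗ[ℝ] ℝ))) := by
  set T := LinearMap.pi (fun i => (φ i : EuclideanSpace ℝ (Fin n) →ₗ[ℝ] ℝ))
  rw [← LinearMap.range_eq_top]
  by_contra hs
  obtain ⟨ξ, hξ0, hξ⟩ := Submodule.exists_dual_map_eq_bot_of_lt_top
    (lt_top_iff_ne_top.2 hs) inferInstance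
  have hker : ∀ v, ξ (T v) = 0 := by
    intro v
    have : ξ (T v) ∈ Submodule.map ξ (LinearMap.range T) :=
      Submodule.mem_map_of_mem (LinearMap.mem_range_self T v)
    rw [hξ] at this
    simpa using this
  have hcomb : ∀ i : Fin k, ξ (fun j => if i = j then (1:ℝ) else 0) = 0 := by
    have hsum : ∑ i : Fin k, (ξ fun j => if i = j then (1:ℝ) else 0) • φ i = 0 := by
      ext v
      have := hker v
      rw [LinearMap.pi_apply_eq_sum_univ ξ (T v)] at this
      simpa [T, LinearMap.pi_apply, mul_comm, Finset.sum_apply] using this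
    exact Fintype.linearIndependent_iff.1 h _ hsum
  refine hξ0 (LinearMap.ext fun z => ?_)
  rw [LinearMap.pi_apply_eq_sum_univ ξ z]
  simp [hcomb]

theorem aux_finrank {n k : ℕ} {φ : Fin k → (EuclideanSpace ℝ (Fin n) →L[ℝ] ℝ)}
    (hsurj : Function.Surjective (LinearMap.pi (fun i => (φ i : EuclideanSpace ℝ (Fin n) →ₗ[ℝ] ℝ)))) :
    Module.finrank ℝ ↥(⨅ i, LinearMap.ker ((φ i : EuclideanSpace ℝ (Fin n) →ₗ[ℝ] ℝ))) + k = n := by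
  set T := LinearMap.pi (fun i => (φ i : EuclideanSpace ℝ (Fin n) →ₗ[ℝ] ℝ))
  have h1 := LinearMap.finrank_range_add_finrank_ker T
  rw [LinearMap.range_eq_top.2 hsurj, finrank_top] at h1
  rw [LinearMap.ker_pi] at h1
  have h2 : Module.finrank ℝ (Fin k → ℝ) = k := by simp
  have h3 : Module.finrank ℝ (EuclideanSpace ℝ (Fin n)) = n := finrank_euclideanSpace_fin
  omega

theorem cone_subset {n : ℕ} {A : Set (EuclideanSpace ℝ (Fin n))} {x : EuclideanSpace ℝ (Fin n)}
    {l k : ℕ} {U : Set (EuclideanSpace ℝ (Fin n))} (hU : IsOpen U) (hxU : x ∈ U)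
    {f : Fin k → EuclideanSpace ℝ (Fin n) → ℝ}
    (hsm : ∀ i, ContDiffOn ℝ (⊤ : ℕ∞) (f i) U) (h0 : ∀ i, f i x = 0)
    (hAU : A ∩ U = {y ∈ U | (∀ i : Fin k, (i : ℕ) < l → 0 ≤ f i y) ∧
      ∀ i : Fin k, l ≤ (i : ℕ) → f i y = 0}) :
    posTangentConeAt A x ⊆
      {v | (∀ i : Fin k, (i : ℕ) < l → 0 ≤ fderiv ℝ (f i) x v) ∧
        ∀ i : Fin k, l ≤ (i : ℕ) → fderiv ℝ (f i) x v = 0} := by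
  have hder : ∀ i, HasFDerivAt (f i) (fderiv ℝ (f i) x) x := fun i =>
    (((hsm i).contDiffAt (hU.mem_nhds hxU)).hasStrictFDerivAt (by simp)).hasFDerivAt
  intro v hv
  obtain ⟨α, L, hL, c₀, d, hd0, hd, hcd₀⟩ := exists_fun_of_mem_tangentConeAt hv
  set c : α → ℝ := fun m => (c₀ m : ℝ) with hcdef
  have hcd : Tendsto (fun m => c m • d m) L (𝓝 v) := by
    simpa only [NNReal.smul_def] using hcd₀
  have hdU : ∀ᶠ m in L, x + d m ∈ U := by
    have : Tendsto (fun m => x + d m) L (𝓝 x) := by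
      simpa using tendsto_const_nhds.add hd0
    exact this.eventually (hU.mem_nhds hxU)
  have hmem : ∀ᶠ m in L, x + d m ∈ A ∩ U := hd.and hdU
  have hpat : ∀ᶠ m in L, (∀ i : Fin k, (i : ℕ) < l → 0 ≤ f i (x + d m)) ∧
      ∀ i : Fin k, l ≤ (i : ℕ) → f i (x + d m) = 0 := by
    filter_upwards [hmem] with m hm
    rw [hAU] at hm
    exact hm.2
  have key : ∀ i, Tendsto (fun m => c m • (f i (x + d m) - f i x)) L
      (𝓝 (fderiv ℝ (f i) x v)) := fun i =>
    ((hder i).hasFDerivWithinAt (s := univ)).lim hd0 (by simp) hcd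
  have hcpos : ∀ᶠ m in L, 0 ≤ c m := Eventually.of_forall fun m => (c₀ m).2
  constructor
  · intro i hi
    refine ge_of_tendsto (key i) ?_
    filter_upwards [hpat, hcpos] with m hm hcm
    rw [h0 i, sub_zero]
    exact smul_nonneg hcm (hm.1 i hi)
  · intro i hi
    refine tendsto_nhds_unique ((key i).congr' ?_) tendsto_const_nhds
    filter_upwards [hpat] with m hm
    rw [h0 i, sub_zero, hm.2 i hi, smul_zero]

theorem cone_superset {n : ℕ} {A : Set (EuclideanSpace ℝ (Fin n))} {x : EuclideanSpace ℝ (Fin n)}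
    {l k : ℕ} {U : Set (EuclideanSpace ℝ (Fin n))} (hU : IsOpen U) (hxU : x ∈ U)
    {f : Fin k → EuclideanSpace ℝ (Fin n) → ℝ}
    (hsm : ∀ i, ContDiffOn ℝ (⊤ : ℕ∞) (f i) U) (h0 : ∀ i, f i x = 0)
    (hind : LinearIndependent ℝ (fun i => fderiv ℝ (f i) x))
    (hAU : A ∩ U = {y ∈ U | (∀ i : Fin k, (i : ℕ) < l → 0 ≤ f i y) ∧
      ∀ i : Fin k, l ≤ (i : ℕ) → f i y = 0}) :
    {v | (∀ i : Fin k, (i : ℕ) < l → 0 ≤ fderiv ℝ (f i) x v) ∧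
        ∀ i : Fin k, l ≤ (i : ℕ) → fderiv ℝ (f i) x v = 0} ⊆ posTangentConeAt A x := by
  classical
  set φ : Fin k → (EuclideanSpace ℝ (Fin n) →L[ℝ] ℝ) := fun i => fderiv ℝ (f i) x with hφ
  have hsurj : Function.Surjective
      (LinearMap.pi (fun i => (φ i : EuclideanSpace ℝ (Fin n) →ₗ[ℝ] ℝ))) := aux_surj hind
  obtain ⟨S₀, hS₀⟩ := (LinearMap.pi (fun i => (φ i : EuclideanSpace ℝ (Fin n) →ₗ[ℝ] ℝ))).exists_rightInverse_of_surjective (LinearMap.range_eq_top.2 hsurj)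
  set S : (Fin k → ℝ) →L[ℝ] EuclideanSpace ℝ (Fin n) := LinearMap.toContinuousLinearMap S₀ with hS
  set Φ : EuclideanSpace ℝ (Fin n) →L[ℝ] (Fin k → ℝ) := ContinuousLinearMap.pi φ with hΦdef
  have hSΦ : ∀ z, Φ (S z) = z := by
    intro z
    have := congrArg (fun (T : (Fin k → ℝ) →ₗ[ℝ] (Fin k → ℝ)) => T z) hS₀
    exact this
  set K := LinearMap.ker (Φ : EuclideanSpace ℝ (Fin n) →ₗ[ℝ] (Fin k → ℝ)) with hK
  have hmemK : ∀ v, v - S (Φ v) ∈ K := by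
    intro v
    rw [LinearMap.mem_ker, ContinuousLinearMap.coe_coe, map_sub, hSΦ, sub_self]
  set P : EuclideanSpace ℝ (Fin n) →L[ℝ] K :=
    ContinuousLinearMap.codRestrict (ContinuousLinearMap.id ℝ _ - S.comp Φ) K
      (fun v => hmemK v) with hP
  have hPapply : ∀ v, (P v : EuclideanSpace ℝ (Fin n)) = v - S (Φ v) := fun v => rfl
  set M₁ : EuclideanSpace ℝ (Fin n) →L[ℝ] (Fin k → ℝ) × K := Φ.prod P with hM₁
  set M₂ : ((Fin k → ℝ) × K) →L[ℝ] EuclideanSpace ℝ (Fin n) :=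
    S.comp (ContinuousLinearMap.fst ℝ _ _) + K.subtypeL.comp (ContinuousLinearMap.snd ℝ _ _)
    with hM₂
  have h₁ : Function.LeftInverse M₂ M₁ := by
    intro v
    simp [M₁, M₂, hPapply, ContinuousLinearMap.prod_apply]
  have h₂ : Function.RightInverse M₂ M₁ := by
    rintro ⟨z, w⟩
    have hw : Φ (w : EuclideanSpace ℝ (Fin n)) = 0 := w.2
    refine Prod.ext ?_ (Subtype.ext ?_)
    · simp [M₁, M₂, hSΦ, hw, ContinuousLinearMap.prod_apply, map_add]
    · simp [M₁, M₂, hPapply, hSΦ, hw, map_add]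
  set e := ContinuousLinearEquiv.equivOfInverse M₁ M₂ h₁ h₂ with he
  set G : EuclideanSpace ℝ (Fin n) → (Fin k → ℝ) × K := fun y => (fun i => f i y, P y) with hGdef
  have hcoe : (e : EuclideanSpace ℝ (Fin n) →L[ℝ] (Fin k → ℝ) × K) = M₁ :=
    ContinuousLinearMap.ext fun v => rfl
  have hG : HasStrictFDerivAt G (e : EuclideanSpace ℝ (Fin n) →L[ℝ] (Fin k → ℝ) × K) x := by
    rw [hcoe, hM₁]
    have hF : HasStrictFDerivAt (fun y => fun i => f i y) Φ x := by
      apply hasStrictFDerivAt_pi''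
      intro i
      have hst : HasStrictFDerivAt (f i) (fderiv ℝ (f i) x) x :=
        ((hsm i).contDiffAt (hU.mem_nhds hxU)).hasStrictFDerivAt (by simp)
      have hproj : (ContinuousLinearMap.proj i).comp Φ = fderiv ℝ (f i) x := by
        ext v; rfl
      rw [hproj]
      exact hst
    exact hF.prodMk (P.hasStrictFDerivAt)
  set g := hG.localInverse G _ x with hg
  have hright : ∀ᶠ z in 𝓝 (G x), G (g z) = z := hG.eventually_right_inverse
  have hgx : g (G x) = x := hG.localInverse_apply_image
  have hcont : ContinuousAt g (G x) := hG.localInverse_continuousAt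
  have hder' : HasStrictFDerivAt g
      ((e.symm : ((Fin k → ℝ) × K) →L[ℝ] EuclideanSpace ℝ (Fin n))) (G x) := hG.to_localInverse
  rintro v ⟨hv1, hv2⟩
  set w := e v with hw
  set c : ℕ → ℝ := fun m => (m : ℝ) + 1 with hc
  have hcpos : ∀ m, (0:ℝ) < c m := by
    intro m; positivity
  have hctop : Tendsto c atTop atTop :=
    tendsto_atTop_add_const_right atTop 1 tendsto_natCast_atTop_atTop
  set z : ℕ → ((Fin k → ℝ) × K) := fun m => G x + (c m)⁻¹ • w with hz
  have hztends : Tendsto z atTop (𝓝 (G x)) := by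
    have hinv : Tendsto (fun m => (c m)⁻¹) atTop (𝓝 0) := hctop.inv_tendsto_atTop
    have : Tendsto (fun m => (c m)⁻¹ • w) atTop (𝓝 ((0:ℝ) • w)) :=
      hinv.smul tendsto_const_nhds
    simpa using tendsto_const_nhds.add this
  set d : ℕ → EuclideanSpace ℝ (Fin n) := fun m => g (z m) - x with hd
  have hgz : Tendsto (fun m => g (z m)) atTop (𝓝 x) := by
    have := hcont.tendsto.comp hztends
    rwa [hgx] at this
  have hzU : ∀ᶠ m in atTop, g (z m) ∈ U := hgz.eventually (hU.mem_nhds hxU)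
  have hzright : ∀ᶠ m in atTop, G (g (z m)) = z m := hztends.eventually hright
  have hmemA : ∀ᶠ m in atTop, x + d m ∈ A := by
    filter_upwards [hzU, hzright] with m hmU hmr
    have hfval : ∀ i, f i (g (z m)) = (c m)⁻¹ * ((fderiv ℝ (f i) x) v) := by
      intro i
      have h1 : f i (g (z m)) = (z m).1 i := congrArg (fun p => p.1 i) hmr
      have h2 : (z m).1 i = f i x + (c m)⁻¹ * ((e v).1 i) := rfl
      have h3 : (e v).1 i = (fderiv ℝ (f i) x) v := rfl
      rw [h1, h2, h3, h0 i, zero_add]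
    have : g (z m) ∈ A ∩ U := by
      rw [hAU]
      refine ⟨hmU, fun i hi => ?_, fun i hi => ?_⟩
      · rw [hfval i]
        exact mul_nonneg (inv_nonneg.2 (hcpos m).le) (hv1 i hi)
      · rw [hfval i, hv2 i hi, mul_zero]
    simpa [hd] using this.1
  have hclim : Tendsto (fun m => ‖c m‖) atTop atTop := by
    have heq : (fun m => ‖c m‖) = c := funext fun m => by
      rw [Real.norm_eq_abs, abs_of_pos (hcpos m)]
    rw [heq]; exact hctop
  have hcdw : Tendsto (fun m => c m • ((c m)⁻¹ • w)) atTop (𝓝 w) := by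
    refine Tendsto.congr' ?_ tendsto_const_nhds
    filter_upwards with m
    rw [smul_smul, mul_inv_cancel₀ (hcpos m).ne', one_smul]
  have hlim := (hder'.hasFDerivAt.hasFDerivWithinAt (s := univ)).lim (l := atTop)
      (c := c) (d := fun m => (c m)⁻¹ • w) (v := w) (tangentConeAt.lim_zero atTop hclim hcdw) (by simp) hcdw
  have hval : (e.symm : ((Fin k → ℝ) × ↥K) →L[ℝ] EuclideanSpace ℝ (Fin n)) w = v := by
    show e.symm (e v) = v
    exact e.symm_apply_apply v
  rw [hval] at hlim
  have hcd : Tendsto (fun m => c m • d m) atTop (𝓝 v) := by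
    have heq2 : (fun m => c m • d m)
        = fun m => c m • (g (G x + (c m)⁻¹ • w) - g (G x)) := by
      funext m
      rw [hgx]
    rw [heq2]; exact hlim
  exact mem_tangentConeAt_of_seq atTop (fun m => (⟨c m, (hcpos m).le⟩ : NNReal)) d
    (tangentConeAt.lim_zero atTop hclim hcd) hmemA hcd
/-- A local presentation of a smooth polyhedron `A` at a point `x₀`, with `l` inequality
constraints `f_i ≥ 0` and `k - l` equality constraints `g_j = 0` (indexed together by
`Fin k`, the first `l` being the inequalities): there is an open neighborhood `U` of `x₀`
and smooth functions `f i : U → ℝ` vanishing at `x₀` with linearly independent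
differentials at `x₀`, such that
`A ∩ U = { x ∈ U | f i x ≥ 0 (i < l), f i x = 0 (i ≥ l) }`. -/
def LocalPres (n : ℕ) (A : Set (EuclideanSpace ℝ (Fin n))) (x₀ : EuclideanSpace ℝ (Fin n))
    (l k : ℕ) : Prop :=
  l ≤ k ∧ k ≤ n ∧ ∃ U : Set (EuclideanSpace ℝ (Fin n)), IsOpen U ∧ x₀ ∈ U ∧
    ∃ f : Fin k → EuclideanSpace ℝ (Fin n) → ℝ,
      (∀ i, ContDiffOn ℝ (⊤ : ℕ∞) (f i) U) ∧ (∀ i, f i x₀ = 0) ∧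
      LinearIndependent ℝ (fun i => fderiv ℝ (f i) x₀) ∧
      A ∩ U = {x ∈ U | (∀ i : Fin k, (i : ℕ) < l → 0 ≤ f i x) ∧
        ∀ i : Fin k, l ≤ (i : ℕ) → f i x = 0}

theorem localPres_cone {n : ℕ} {A : Set (EuclideanSpace ℝ (Fin n))}
    {x : EuclideanSpace ℝ (Fin n)} {l k : ℕ} (h : LocalPres n A x l k) :
    ∃ φ : Fin k → (EuclideanSpace ℝ (Fin n) →L[ℝ] ℝ), LinearIndependent ℝ φ ∧
      posTangentConeAt A x =
        {v | (∀ i : Fin k, (i : ℕ) < l → 0 ≤ φ i v) ∧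
          ∀ i : Fin k, l ≤ (i : ℕ) → φ i v = 0} := by
  obtain ⟨hlk, hkn, U, hU, hxU, f, hsm, h0, hind, hAU⟩ := h
  exact ⟨fun i => fderiv ℝ (f i) x, hind,
    le_antisymm (cone_subset hU hxU hsm h0 hAU) (cone_superset hU hxU hsm h0 hind hAU)⟩

theorem localPres_k_unique {n : ℕ} {A : Set (EuclideanSpace ℝ (Fin n))}
    {x : EuclideanSpace ℝ (Fin n)} {l k l' k' : ℕ}
    (h : LocalPres n A x l k) (h' : LocalPres n A x l' k') : k = k' := by
  have hkn := h.2.1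
  have hkn' := h'.2.1
  obtain ⟨φ, hφi, hφ⟩ := localPres_cone h
  obtain ⟨ψ, hψi, hψ⟩ := localPres_cone h'
  have hsets : (⨅ i, LinearMap.ker ((φ i : EuclideanSpace ℝ (Fin n) →ₗ[ℝ] ℝ)))
      = (⨅ i, LinearMap.ker ((ψ i : EuclideanSpace ℝ (Fin n) →ₗ[ℝ] ℝ))) := by
    have hchar : ∀ (k₀ l₀ : ℕ) (χ : Fin k₀ → (EuclideanSpace ℝ (Fin n) →L[ℝ] ℝ)),
        posTangentConeAt A x =
          {v | (∀ i : Fin k₀, (i : ℕ) < l₀ → 0 ≤ χ i v) ∧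
            ∀ i : Fin k₀, l₀ ≤ (i : ℕ) → χ i v = 0} →
        ∀ v, (v ∈ ⨅ i, LinearMap.ker ((χ i : EuclideanSpace ℝ (Fin n) →ₗ[ℝ] ℝ))) ↔
          (v ∈ posTangentConeAt A x ∧ -v ∈ posTangentConeAt A x) := by
      intro k₀ l₀ χ hχ v
      rw [Submodule.mem_iInf]
      simp only [LinearMap.mem_ker, ContinuousLinearMap.coe_coe, hχ, mem_setOf_eq, map_neg]
      constructor
      · intro hv
        exact ⟨⟨fun i _ => (hv i).ge, fun i _ => hv i⟩,
          ⟨fun i _ => by rw [hv i]; simp, fun i _ => by rw [hv i]; simp⟩⟩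
      · rintro ⟨⟨ha1, ha2⟩, ⟨hb1, hb2⟩⟩ i
        rcases lt_or_ge (i : ℕ) l₀ with hi | hi
        · have := hb1 i hi
          have := ha1 i hi
          linarith
        · exact ha2 i hi
    ext v
    rw [hchar k l φ hφ v, hchar k' l' ψ hψ v]
  have h1 := aux_finrank (aux_surj hφi)
  have h2 := aux_finrank (aux_surj hψi)
  rw [hsets] at h1
  omega

theorem succAbove_val_lt {k l : ℕ} (i₀ : Fin (k+1)) (hi₀ : (i₀ : ℕ) < l) (j : Fin k) :
    ((i₀.succAbove j : Fin (k+1)) : ℕ) < l ↔ (j : ℕ) < l - 1 := by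
  rcases lt_or_ge ((j : ℕ)) ((i₀ : ℕ)) with h | h
  · rw [Fin.succAbove_of_castSucc_lt _ _ (by simpa [Fin.lt_def] using h)]
    simp only [Fin.coe_castSucc]
    omega
  · rw [Fin.succAbove_of_le_castSucc _ _ (by simpa [Fin.le_def] using h)]
    simp only [Fin.val_succ]
    omega

theorem exists_localPres_lt {n : ℕ} {A : Set (EuclideanSpace ℝ (Fin n))} :
    ∀ k : ℕ, ∀ (l : ℕ) (U : Set (EuclideanSpace ℝ (Fin n)))
      (f : Fin k → EuclideanSpace ℝ (Fin n) → ℝ) (y : EuclideanSpace ℝ (Fin n)),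
      l ≤ k → k ≤ n → IsOpen U → y ∈ U →
      (∀ i, ContDiffOn ℝ (⊤ : ℕ∞) (f i) U) →
      LinearIndependent ℝ (fun i => fderiv ℝ (f i) y) →
      A ∩ U = {x ∈ U | (∀ i : Fin k, (i : ℕ) < l → 0 ≤ f i x) ∧
        ∀ i : Fin k, l ≤ (i : ℕ) → f i x = 0} →
      y ∈ A → (∃ i₀, f i₀ y ≠ 0) →
      ∃ l'' k'', k'' < k ∧ LocalPres n A y l'' k'' := by
  intro k
  induction k with
  | zero =>
    rintro l U f y _ _ _ _ _ _ _ _ ⟨i₀, -⟩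
    exact absurd i₀.2 (by omega)
  | succ k ih =>
    rintro l U f y hlk hkn hU hyU hsm hind hAU hyA ⟨i₀, hi₀⟩
    have hy : y ∈ {x ∈ U | (∀ i : Fin (k+1), (i : ℕ) < l → 0 ≤ f i x) ∧
        ∀ i : Fin (k+1), l ≤ (i : ℕ) → f i x = 0} := hAU ▸ ⟨hyA, hyU⟩
    obtain ⟨-, hge, heq⟩ := hy
    have hi₀l : (i₀ : ℕ) < l := by
      by_contra hc
      exact hi₀ (heq i₀ (le_of_not_gt hc))
    have hpos : 0 < f i₀ y := lt_of_le_of_ne (hge i₀ hi₀l) (Ne.symm hi₀)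
    set U' : Set (EuclideanSpace ℝ (Fin n)) := U ∩ (f i₀) ⁻¹' (Ioi 0) with hU'def
    have hU'open : IsOpen U' := (hsm i₀).continuousOn.isOpen_inter_preimage hU isOpen_Ioi
    have hyU' : y ∈ U' := ⟨hyU, hpos⟩
    have hU'sub : U' ⊆ U := inter_subset_left
    set f' : Fin k → EuclideanSpace ℝ (Fin n) → ℝ := fun j => f (i₀.succAbove j) with hf'def
    have hsm' : ∀ j, ContDiffOn ℝ (⊤ : ℕ∞) (f' j) U' := fun j => (hsm _).mono hU'sub
    have hind' : LinearIndependent ℝ (fun j => fderiv ℝ (f' j) y) :=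
      hind.comp i₀.succAbove Fin.succAbove_right_injective
    have hAU' : A ∩ U' = {x ∈ U' | (∀ j : Fin k, (j : ℕ) < l - 1 → 0 ≤ f' j x) ∧
        ∀ j : Fin k, l - 1 ≤ (j : ℕ) → f' j x = 0} := by
      ext x
      constructor
      · rintro ⟨hxA, hxU'⟩
        have hx : x ∈ {x ∈ U | (∀ i : Fin (k+1), (i : ℕ) < l → 0 ≤ f i x) ∧
            ∀ i : Fin (k+1), l ≤ (i : ℕ) → f i x = 0} := hAU ▸ ⟨hxA, hU'sub hxU'⟩
        obtain ⟨-, hge', heq'⟩ := hx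
        refine ⟨hxU', fun j hj => hge' _ ((succAbove_val_lt i₀ hi₀l j).2 hj),
          fun j hj => heq' _ ?_⟩
        have := (succAbove_val_lt i₀ hi₀l j).1
        omega
      · rintro ⟨hxU', hge', heq'⟩
        refine ⟨?_, hxU'⟩
        have hx : x ∈ {x ∈ U | (∀ i : Fin (k+1), (i : ℕ) < l → 0 ≤ f i x) ∧
            ∀ i : Fin (k+1), l ≤ (i : ℕ) → f i x = 0} := by
          refine ⟨hxU'.1, fun i hi => ?_, fun i hi => ?_⟩
          · rcases eq_or_ne i i₀ with rfl | hne
            · exact le_of_lt hxU'.2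
            · obtain ⟨j, rfl⟩ := Fin.exists_succAbove_eq hne
              exact hge' j ((succAbove_val_lt i₀ hi₀l j).1 hi)
          · have hne : i ≠ i₀ := by
              intro hcon
              rw [hcon] at hi
              omega
            obtain ⟨j, rfl⟩ := Fin.exists_succAbove_eq hne
            refine heq' j ?_
            have := (succAbove_val_lt i₀ hi₀l j).2
            omega
        have := hAU ▸ hx
        exact ((Set.ext_iff.1 hAU x).2 hx).1
    by_cases hall : ∀ j, f' j y = 0
    · refine ⟨l - 1, k, Nat.lt_succ_self k, ?_, by omega, U', hU'open, hyU', f', hsm',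
        hall, hind', hAU'⟩
      omega
    · push_neg at hall
      obtain ⟨l'', k'', hk'', hp⟩ := ih (l - 1) U' f' y (by omega) (by omega) hU'open hyU'
        hsm' hind' hAU' hyA hall
      exact ⟨l'', k'', by omega, hp⟩

/-- A smooth polyhedron (properly embedded smooth submanifold with corners) in `ℝⁿ`:
a closed subset admitting a local presentation at each of its points. -/
def IsSmoothPolyhedron (n : ℕ) (A : Set (EuclideanSpace ℝ (Fin n))) : Prop :=
  IsClosed A ∧ ∀ x₀ ∈ A, ∃ l k, LocalPres n A x₀ l k

/-- The stratum `A_m` of a smooth polyhedron: points admitting a local presentation with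
`k = n - m` total constraints (written `m + k = n` to avoid truncated subtraction). -/
def stratum (n : ℕ) (A : Set (EuclideanSpace ℝ (Fin n))) (m : ℕ) :
    Set (EuclideanSpace ℝ (Fin n)) :=
  {x₀ ∈ A | ∃ l k, LocalPres n A x₀ l k ∧ m + k = n}

/-- A smooth polyhedron `A ⊆ ℝⁿ` (chart model of a smooth `n`-manifold)
admits a natural stratification `A = ⨆_{m ≤ n} A_m` into pairwise disjoint locally closed
smooth submanifolds; `A_n` is the topological interior of `A`, and each `A_m` is a smooth
submanifold of dimension `m` (expressed as: locally a regular common zero set of `n - m`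
smooth functions with everywhere linearly independent differentials). -/
theorem stmt_10 (n : ℕ) (A : Set (EuclideanSpace ℝ (Fin n)))
    (hA : IsSmoothPolyhedron n A) :
    (A = ⋃ m ∈ Iic n, stratum n A m) ∧
    (∀ m m', m ≠ m' → stratum n A m ∩ stratum n A m' = ∅) ∧
    stratum n A n = interior A ∧
    (∀ m ≤ n, ∀ x ∈ stratum n A m, ∃ U : Set (EuclideanSpace ℝ (Fin n)),
      IsOpen U ∧ x ∈ U ∧ ∃ f : Fin (n - m) → EuclideanSpace ℝ (Fin n) → ℝ,
        (∀ i, ContDiffOn ℝ (⊤ : ℕ∞) (f i) U) ∧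
        (∀ y ∈ U, LinearIndependent ℝ fun i => fderiv ℝ (f i) y) ∧
        stratum n A m ∩ U = {y ∈ U | ∀ i, f i y = 0}) := by
  refine ⟨?_, ?_, ?_, ?_⟩
  · -- A = union of strata
    apply Subset.antisymm
    · intro x hx
      obtain ⟨l, k, hp⟩ := hA.2 x hx
      have hkn : k ≤ n := hp.2.1
      refine mem_iUnion₂.2 ⟨n - k, by simp [mem_Iic], hx, l, k, hp, by omega⟩
    · exact iUnion₂_subset fun m _ x hx => hx.1
  · -- disjoint
    intro m m' hne
    rw [eq_empty_iff_forall_notMem]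
    rintro x ⟨⟨-, l₁, k₁, hp₁, hm₁⟩, ⟨-, l₂, k₂, hp₂, hm₂⟩⟩
    have := localPres_k_unique hp₁ hp₂
    omega
  · -- stratum n = interior A
    apply Subset.antisymm
    · rintro x ⟨hxA, l, k, ⟨hlk, hkn, U, hUo, hxU, f, -, -, -, hAU⟩, hnk⟩
      have hk0 : k = 0 := by omega
      subst hk0
      have hUA : U ⊆ A := by
        have : A ∩ U = U := by
          rw [hAU]
          ext z
          exact ⟨fun h => h.1, fun h => ⟨h, fun i => i.elim0, fun i => i.elim0⟩⟩
        rw [← this]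
        exact inter_subset_left
      exact mem_interior.2 ⟨U, hUA, hUo, hxU⟩
    · intro x hx
      refine ⟨interior_subset hx, 0, 0, ⟨le_refl 0, Nat.zero_le n, interior A, isOpen_interior,
        hx, fun i => i.elim0, fun i => i.elim0, fun i => i.elim0,
        linearIndependent_empty_type, ?_⟩, by omega⟩
      rw [Set.inter_eq_right.2 interior_subset]
      ext z
      exact ⟨fun h => ⟨h, fun i => i.elim0, fun i => i.elim0⟩, fun h => h.1⟩
  · -- local structure of strata
    intro m hm x hx
    obtain ⟨hxA, l, k, hp, hmk⟩ := hx
    have hk : k = n - m := by omega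
    subst hk
    obtain ⟨hlk, hkn, U, hUo, hxU, f, hsm, hf0, hind, hAU⟩ := hp
    -- shrink U to where differentials are independent
    have hcont : ContinuousOn (fun y => fun i : Fin (n - m) => fderiv ℝ (f i) y) U := by
      rw [continuousOn_pi]
      exact fun i => (hsm i).continuousOn_fderiv_of_isOpen hUo (by simp)
    set U' : Set (EuclideanSpace ℝ (Fin n)) :=
      U ∩ (fun y => fun i : Fin (n - m) => fderiv ℝ (f i) y) ⁻¹'
        {φ | LinearIndependent ℝ φ} with hU'def
    have hU'o : IsOpen U' := hcont.isOpen_inter_preimage hUo isOpen_setOf_linearIndependent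
    have hxU' : x ∈ U' := ⟨hxU, hind⟩
    have hU'sub : U' ⊆ U := inter_subset_left
    have hindU' : ∀ y ∈ U', LinearIndependent ℝ (fun i => fderiv ℝ (f i) y) := fun y hy => hy.2
    have hAU' : A ∩ U' = {z ∈ U' | (∀ i : Fin (n - m), (i : ℕ) < l → 0 ≤ f i z) ∧
        ∀ i : Fin (n - m), l ≤ (i : ℕ) → f i z = 0} := by
      ext z
      constructor
      · rintro ⟨hzA, hzU'⟩
        have : z ∈ A ∩ U := ⟨hzA, hU'sub hzU'⟩
        rw [hAU] at this
        exact ⟨hzU', this.2⟩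
      · rintro ⟨hzU', hpat⟩
        have : z ∈ A ∩ U := by
          rw [hAU]
          exact ⟨hU'sub hzU', hpat⟩
        exact ⟨this.1, hzU'⟩
    refine ⟨U', hU'o, hxU', f, fun i => (hsm i).mono hU'sub, hindU', ?_⟩
    ext y
    constructor
    · rintro ⟨⟨hyA, l₂, k₂, hp₂, hmk₂⟩, hyU'⟩
      refine ⟨hyU', ?_⟩
      by_contra hcon
      push_neg at hcon
      obtain ⟨l'', k'', hlt, hp''⟩ := exists_localPres_lt (n - m) l U' f y hlk hkn hU'o hyU'
        (fun i => (hsm i).mono hU'sub) (hindU' y hyU') hAU' hyA hcon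
      have := localPres_k_unique hp'' hp₂
      omega
    · rintro ⟨hyU', hy0⟩
      have hyA : y ∈ A := by
        have : y ∈ A ∩ U' := by
          rw [hAU']
          exact ⟨hyU', fun i _ => (hy0 i).ge, fun i _ => hy0 i⟩
        exact this.1
      exact ⟨⟨hyA, l, n - m, ⟨hlk, hkn, U', hU'o, hyU', f, fun i => (hsm i).mono hU'sub,
        hy0, hindU' y hyU', hAU'⟩, by omega⟩, hyU'⟩
end

section
/- Let ξ, η be two non-antipodal unit vectors in the unit sphere of a finite-dimensional inner product space, spanning cones C_ξ = ℝ_{≥0}ξ and C_η = ℝ_{≥0}η. Then every unit vector in the Minkowski sum C_ξ + C_η other than ξ and η lies on the open minimizing geodesic segment {[cos t · ξ + sin t · η] : t ∈ (0, π/2)} (after normalization), and distinct pairs (ξ,η) with disjoint cone interiors give segments with pairwise disjoint interiors. -/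
open Real Set

private lemma aux_ne_zero {E : Type*} [NormedAddCommGroup E] [InnerProductSpace ℝ E]
    {ξ η : E} (hξ : ‖ξ‖ = 1) (hη : ‖η‖ = 1) (hna : η ≠ -ξ)
    {c s : ℝ} (hc : 0 < c) (hs : 0 < s) : c • ξ + s • η ≠ 0 := by
  intro h
  have h1 : c • ξ = -(s • η) := eq_neg_of_add_eq_zero_left h
  have hn : c = s := by
    have := congrArg norm h1
    rw [norm_neg, norm_smul, norm_smul, hξ, hη] at this
    simpa [abs_of_pos hc, abs_of_pos hs] using this
  subst hn
  have : ξ = -η := by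
    have h2 : c • ξ = c • (-η) := by rw [h1, smul_neg]
    exact smul_right_injective E hc.ne' h2
  exact hna (by rw [this, neg_neg])

/-- Let `ξ, η` be non-antipodal distinct unit vectors of a real inner
product space, spanning the cone `C_{ξ,η} = ℝ₊ξ + ℝ₊η`.  Every unit vector of `C_{ξ,η}`
other than `ξ` and `η` lies on the open minimizing segment
`{ normalization of cos t • ξ + sin t • η : t ∈ (0, π/2) }`; and for a second such pair
`(ξ', η')`, if the open cones `{aξ + bη : a, b > 0}` and `{aξ' + bη' : a, b > 0}` are
disjoint then the open segments determined by the two pairs are disjoint. -/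
theorem stmt_12 {E : Type*} [NormedAddCommGroup E] [InnerProductSpace ℝ E]
    (ξ η ξ' η' : E) (hξ : ‖ξ‖ = 1) (hη : ‖η‖ = 1) (hne : η ≠ ξ) (hna : η ≠ -ξ)
    (hξ' : ‖ξ'‖ = 1) (hη' : ‖η'‖ = 1) (hne' : η' ≠ ξ') (hna' : η' ≠ -ξ') :
    (∀ ζ : E, ‖ζ‖ = 1 → (∃ a b : ℝ, 0 ≤ a ∧ 0 ≤ b ∧ ζ = a • ξ + b • η) →
      ζ ≠ ξ → ζ ≠ η →
      ∃ t ∈ Ioo (0 : ℝ) (π / 2),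
        ζ = ‖Real.cos t • ξ + Real.sin t • η‖⁻¹ • (Real.cos t • ξ + Real.sin t • η)) ∧
    ({v : E | ∃ a b : ℝ, 0 < a ∧ 0 < b ∧ v = a • ξ + b • η} ∩
        {v : E | ∃ a b : ℝ, 0 < a ∧ 0 < b ∧ v = a • ξ' + b • η'} = ∅ →
      {ζ : E | ∃ t ∈ Ioo (0 : ℝ) (π / 2),
          ζ = ‖Real.cos t • ξ + Real.sin t • η‖⁻¹ • (Real.cos t • ξ + Real.sin t • η)} ∩
        {ζ : E | ∃ t ∈ Ioo (0 : ℝ) (π / 2),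
          ζ = ‖Real.cos t • ξ' + Real.sin t • η'‖⁻¹ • (Real.cos t • ξ' + Real.sin t • η')} =
        ∅) := by
  constructor
  · rintro ζ hζ ⟨a, b, ha, hb, hab⟩ hζξ hζη
    have hb' : 0 < b := by
      rcases hb.lt_or_eq with h | h
      · exact h
      · exfalso
        rw [← h, zero_smul, add_zero] at hab
        have : a = 1 := by
          have := congrArg norm hab
          rw [hζ, norm_smul, hξ] at this
          simpa [abs_of_nonneg ha] using this.symm
        exact hζξ (by rw [hab, this, one_smul])
    have ha' : 0 < a := by
      rcases ha.lt_or_eq with h | h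
      · exact h
      · exfalso
        rw [← h, zero_smul, zero_add] at hab
        have : b = 1 := by
          have := congrArg norm hab
          rw [hζ, norm_smul, hη] at this
          simpa [abs_of_nonneg hb] using this.symm
        exact hζη (by rw [hab, this, one_smul])
    set x : ℝ := b / a with hx
    have hx' : 0 < x := div_pos hb' ha'
    refine ⟨Real.arctan x, ⟨by simpa using Real.arctan_strictMono hx', Real.arctan_lt_pi_div_two x⟩, ?_⟩
    set s : ℝ := Real.sqrt (1 + x ^ 2) with hsdef
    have hs : 0 < s := Real.sqrt_pos.2 (by positivity)
    have hcos : Real.cos (Real.arctan x) = 1 / s := Real.cos_arctan x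
    have hsin : Real.sin (Real.arctan x) = x / s := Real.sin_arctan x
    set c : ℝ := 1 / (a * s) with hcdef
    have hc : 0 < c := by positivity
    have hw : Real.cos (Real.arctan x) • ξ + Real.sin (Real.arctan x) • η = c • ζ := by
      rw [hab, hcos, hsin, smul_add, smul_smul, smul_smul]
      have e1 : (1:ℝ) / s = c * a := by rw [hcdef]; field_simp
      have e2 : x / s = c * b := by rw [hcdef, hx]; field_simp
      rw [e1, e2, mul_comm c a, mul_comm c b, mul_smul, mul_smul]
    rw [hw, norm_smul, hζ, mul_one, Real.norm_eq_abs, abs_of_pos hc, smul_smul,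
      inv_mul_cancel₀ hc.ne', one_smul]
  · intro hdisj
    rw [eq_empty_iff_forall_notMem]
    rintro ζ ⟨⟨t, ⟨ht0, ht1⟩, hζ⟩, ⟨t', ⟨ht0', ht1'⟩, hζ'⟩⟩
    have hcos : 0 < Real.cos t := Real.cos_pos_of_mem_Ioo ⟨by linarith [Real.pi_pos], ht1⟩
    have hsin : 0 < Real.sin t := Real.sin_pos_of_pos_of_lt_pi ht0 (by linarith [Real.pi_pos])
    have hcos' : 0 < Real.cos t' := Real.cos_pos_of_mem_Ioo ⟨by linarith [Real.pi_pos], ht1'⟩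
    have hsin' : 0 < Real.sin t' := Real.sin_pos_of_pos_of_lt_pi ht0' (by linarith [Real.pi_pos])
    have hw : (0:ℝ) < ‖Real.cos t • ξ + Real.sin t • η‖ :=
      norm_pos_iff.2 (aux_ne_zero hξ hη hna hcos hsin)
    have hw' : (0:ℝ) < ‖Real.cos t' • ξ' + Real.sin t' • η'‖ :=
      norm_pos_iff.2 (aux_ne_zero hξ' hη' hna' hcos' hsin')
    have hmem : ζ ∈ ({v : E | ∃ a b : ℝ, 0 < a ∧ 0 < b ∧ v = a • ξ + b • η} ∩
        {v : E | ∃ a b : ℝ, 0 < a ∧ 0 < b ∧ v = a • ξ' + b • η'}) := by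
      constructor
      · exact ⟨‖Real.cos t • ξ + Real.sin t • η‖⁻¹ * Real.cos t,
          ‖Real.cos t • ξ + Real.sin t • η‖⁻¹ * Real.sin t,
          by positivity, by positivity,
          by rw [hζ, smul_add, smul_smul, smul_smul]⟩
      · exact ⟨‖Real.cos t' • ξ' + Real.sin t' • η'‖⁻¹ * Real.cos t',
          ‖Real.cos t' • ξ' + Real.sin t' • η'‖⁻¹ * Real.sin t',
          by positivity, by positivity,
          by rw [hζ', smul_add, smul_smul, smul_smul]⟩
    rw [hdisj] at hmem
    exact hmem
end
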